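/- Fix an unsatisfiable CNF formula F with n variables and integers w, s ≥ 1 with 2^n ≥ s ≥ 6nw, with blocks, t, 𝓗, ∂, conditions and the partial assignments α(p) as defined. If p is a condition and I ⊆ [s], then the restriction p↾I is a condition and α(p↾I) ⊆ α(p). -/

import Mathlib

/-! ## Clauses, CNFs and Resolution -/

/-- A clause over variables of type `α`: a finite set of literals `(x, b)`,
where `(x, true)` is the positive literal `X` and `(x, false)` is `¬X`. -/
abbrev Clause (α : Type) := Finset (α × Bool)

/-- A clause is non-tautological if it contains no variable together with its negation. -/
def Clause.Nontaut {α : Type} (C : Clause α) : Prop :=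
  ∀ x : α, ¬((x, true) ∈ C ∧ (x, false) ∈ C)

/-- A Resolution refutation of the set of clauses `F`: a nonempty sequence of
non-tautological clauses, each of which is a weakening (i.e. a superset) of a clause
of `F`, or a weakening of a resolvent `(D_v ∖ {X}) ∪ (D_w ∖ {¬X})` of two earlier
clauses `D_v, D_w` with `X ∈ D_v` and `¬X ∈ D_w`; the last clause is empty.
The length of the refutation is the length of the list. -/
def IsResRefutation {α : Type} [DecidableEq α] (F : Set (Clause α)) (P : List (Clause α)) : Prop :=
  P ≠ [] ∧
  (∀ u : Fin P.length,
      Clause.Nontaut (P.get u) ∧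
      ((∃ C ∈ F, C ⊆ P.get u) ∨
        ∃ v w : Fin P.length, (v : ℕ) < (u : ℕ) ∧ (w : ℕ) < (u : ℕ) ∧ ∃ x : α,
          (x, true) ∈ P.get v ∧ (x, false) ∈ P.get w ∧
          ((P.get v).erase (x, true) ∪ (P.get w).erase (x, false)) ⊆ P.get u)) ∧
  P.getLast? = some (∅ : Clause α)

/-- Satisfiability of a set of clauses. -/
def CnfSat {α : Type} (S : Set (Clause α)) : Prop :=
  ∃ a : α → Bool, ∀ C ∈ S, ∃ l ∈ C, a l.1 = l.2

/-- The size of a CNF: the sum of the sizes (numbers of literals) of its clauses. -/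
noncomputable def cnfSize {α : Type} (S : Set (Clause α)) : ℕ :=
  ∑ᶠ C ∈ S, Finset.card C

/-! ## Restrictions (partial assignments) -/

/-- The restriction (partial assignment) `ρ` satisfies the clause `C` (i.e. `C↾ρ = 1`). -/
def Clause.SatByR {α : Type} (ρ : α → Option Bool) (C : Clause α) : Prop :=
  ∃ l ∈ C, ρ l.1 = some l.2

/-- The restriction `ρ` falsifies the clause `C` (i.e. `C↾ρ = 0`). -/
def Clause.FalsByR {α : Type} (ρ : α → Option Bool) (C : Clause α) : Prop :=
  ∀ l ∈ C, ρ l.1 = some (!l.2)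

/-- The clause `C↾ρ` (relevant when `C` is neither satisfied nor falsified):
remove from `C` all falsified literals. -/
def Clause.restrictBy {α : Type} [DecidableEq α] (ρ : α → Option Bool) (C : Clause α) :
    Clause α :=
  C.filter (fun l => ρ l.1 ≠ some (!l.2))

/-- `F↾ρ` for a set of clauses `F`: it contains `C↾ρ` for those `C ∈ F` neither satisfied
nor falsified by `ρ`, together with the empty clause if some `C ∈ F` is falsified by `ρ`. -/
def cnfRestrict {α : Type} [DecidableEq α] (ρ : α → Option Bool) (S : Set (Clause α)) :
    Set (Clause α) :=
  { E | ∃ C ∈ S, ¬Clause.SatByR ρ C ∧ ¬Clause.FalsByR ρ C ∧ E = Clause.restrictBy ρ C } ∪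
  { E | E = (∅ : Clause α) ∧ ∃ C ∈ S, Clause.FalsByR ρ C }

open scoped Classical in
/-- `Π↾ρ` for a sequence of clauses: remove the satisfied clauses (the `1`s) and replace
the falsified ones (the `0`s) by the empty clause. -/
noncomputable def seqRestrict {α : Type} [DecidableEq α] (ρ : α → Option Bool)
    (P : List (Clause α)) : List (Clause α) :=
  (P.filter (fun C => decide (¬Clause.SatByR ρ C))).map
    (fun C => if Clause.FalsByR ρ C then (∅ : Clause α) else Clause.restrictBy ρ C)

/-- The partial assignment `σ` extends the partial assignment `ρ`. -/
def optExtends {α : Type} (ρ σ : α → Option Bool) : Prop :=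
  ∀ x b, ρ x = some b → σ x = some b

/-! ## CNFs with an explicit enumeration of clauses -/

/-- A CNF formula with variables `X_1, …, X_n` (indices in `Finset.Icc 1 n`) given with an
explicit enumeration `Cl 1, …, Cl m` of its clauses. -/
structure CNFFam where
  n : ℕ
  m : ℕ
  Cl : ℕ → Clause ℕ

namespace CNFFam

/-- Well-formedness: the clauses `C_1, …, C_m` are non-tautological, pairwise distinct
(they enumerate a set of clauses), and use only the variables `X_1, …, X_n`. -/
def WF (F : CNFFam) : Prop :=
  (∀ j ∈ Finset.Icc 1 F.m, Clause.Nontaut (F.Cl j) ∧ ∀ l ∈ F.Cl j, l.1 ∈ Finset.Icc 1 F.n) ∧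
  (∀ j ∈ Finset.Icc 1 F.m, ∀ j' ∈ Finset.Icc 1 F.m, F.Cl j = F.Cl j' → j = j')

/-- The underlying set of clauses. -/
def clauseSet (F : CNFFam) : Set (Clause ℕ) :=
  { C | ∃ j ∈ Finset.Icc 1 F.m, C = F.Cl j }

/-- `F` is satisfiable. -/
def Sat (F : CNFFam) : Prop := CnfSat F.clauseSet

/-- `F` is a 3-CNF: all clauses have size at most 3. -/
def Is3CNF (F : CNFFam) : Prop := ∀ j ∈ Finset.Icc 1 F.m, (F.Cl j).card ≤ 3

end CNFFam

/-! ## The variables of the formulas REF and RREF -/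

/-- The propositional variables of `REF(F,s)` and `RREF(F,s)`. -/
inductive RefVar : Type where
  | D (u i : ℕ) (b : Bool)
  | V (u i : ℕ)
  | I (u j : ℕ)
  | L (u v : ℕ)
  | R (u v : ℕ)
  | P (u : ℕ)
deriving DecidableEq

abbrev VClause := Clause RefVar

/-- The index mentioned by a variable: `D[u,i,b], V[u,i], I[u,j], L[u,v], R[u,v], P[u]`
all mention the index `u`. -/
def RefVar.idx : RefVar → ℕ
  | .D u _ _ => u
  | .V u _ => u
  | .I u _ => u
  | .L u _ => u
  | .R u _ => u
  | .P u => u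

/-- The positive literal on a variable. -/
def pLit (x : RefVar) : RefVar × Bool := (x, true)

/-- The negative literal on a variable. -/
def nLit (x : RefVar) : RefVar × Bool := (x, false)

/-- The index-width of a clause: the number of indices mentioned by its variables. -/
def idxWidth (C : VClause) : ℕ := (C.image (fun l => RefVar.idx l.1)).card

/-! ## The clauses of REF and RREF -/

namespace Ref

/-- (A1) `V[u,0] ∨ V[u,1] ∨ ⋯ ∨ V[u,n]`. -/
def A1 (F : CNFFam) (A : Finset ℕ) : Set VClause :=
  { C | ∃ u ∈ A, C = (Finset.range (F.n + 1)).image (fun i => pLit (.V u i)) }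

/-- (A2) `I[u,0] ∨ I[u,1] ∨ ⋯ ∨ I[u,m]`. -/
def A2 (F : CNFFam) (A : Finset ℕ) : Set VClause :=
  { C | ∃ u ∈ A, C = (Finset.range (F.m + 1)).image (fun j => pLit (.I u j)) }

/-- (A3) `L[u,0] ∨ L[u,1] ∨ ⋯ ∨ L[u,s]` (disjunction over the index set and 0). -/
def A3 (A : Finset ℕ) : Set VClause :=
  { C | ∃ u ∈ A, C = (insert 0 A).image (fun v => pLit (.L u v)) }

/-- (A4) `R[u,0] ∨ R[u,1] ∨ ⋯ ∨ R[u,s]`. -/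
def A4 (A : Finset ℕ) : Set VClause :=
  { C | ∃ u ∈ A, C = (insert 0 A).image (fun v => pLit (.R u v)) }

/-- (A5) `¬V[u,i] ∨ ¬V[u,i']`, `i ≠ i'`. -/
def A5 (F : CNFFam) (A : Finset ℕ) : Set VClause :=
  { C | ∃ u ∈ A, ∃ i ∈ Finset.range (F.n + 1), ∃ i' ∈ Finset.range (F.n + 1),
      i ≠ i' ∧ C = {nLit (.V u i), nLit (.V u i')} }

/-- (A6) `¬I[u,j] ∨ ¬I[u,j']`, `j ≠ j'`. -/
def A6 (F : CNFFam) (A : Finset ℕ) : Set VClause :=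
  { C | ∃ u ∈ A, ∃ j ∈ Finset.range (F.m + 1), ∃ j' ∈ Finset.range (F.m + 1),
      j ≠ j' ∧ C = {nLit (.I u j), nLit (.I u j')} }

/-- (A7) `¬L[u,v] ∨ ¬L[u,v']`, `v ≠ v'`. -/
def A7 (A : Finset ℕ) : Set VClause :=
  { C | ∃ u ∈ A, ∃ v ∈ insert 0 A, ∃ v' ∈ insert 0 A,
      v ≠ v' ∧ C = {nLit (.L u v), nLit (.L u v')} }

/-- (A8) `¬R[u,v] ∨ ¬R[u,v']`, `v ≠ v'`. -/
def A8 (A : Finset ℕ) : Set VClause :=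
  { C | ∃ u ∈ A, ∃ v ∈ insert 0 A, ∃ v' ∈ insert 0 A,
      v ≠ v' ∧ C = {nLit (.R u v), nLit (.R u v')} }

/-- (A9) `¬I[u,0] ∨ ¬V[u,0]`. -/
def A9 (A : Finset ℕ) : Set VClause := { C | ∃ u ∈ A, C = {nLit (.I u 0), nLit (.V u 0)} }

/-- (A10) `I[u,0] ∨ V[u,0]`. -/
def A10 (A : Finset ℕ) : Set VClause := { C | ∃ u ∈ A, C = {pLit (.I u 0), pLit (.V u 0)} }

/-- (A11) `¬I[u,0] ∨ ¬L[u,0]`. -/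
def A11 (A : Finset ℕ) : Set VClause := { C | ∃ u ∈ A, C = {nLit (.I u 0), nLit (.L u 0)} }

/-- (A12) `¬I[u,0] ∨ ¬R[u,0]`. -/
def A12 (A : Finset ℕ) : Set VClause := { C | ∃ u ∈ A, C = {nLit (.I u 0), nLit (.R u 0)} }

/-- (A13) `¬L[u,v]` for `u ≤ v`. -/
def A13 (A : Finset ℕ) : Set VClause :=
  { C | ∃ u ∈ A, ∃ v ∈ A, u ≤ v ∧ C = {nLit (.L u v)} }

/-- (A14) `¬R[u,v]` for `u ≤ v`. -/
def A14 (A : Finset ℕ) : Set VClause :=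
  { C | ∃ u ∈ A, ∃ v ∈ A, u ≤ v ∧ C = {nLit (.R u v)} }

/-- (A15) `¬L[u,v] ∨ ¬V[u,i] ∨ D[v,i,0]`. -/
def A15 (F : CNFFam) (A : Finset ℕ) : Set VClause :=
  { C | ∃ u ∈ A, ∃ v ∈ A, ∃ i ∈ Finset.Icc 1 F.n,
      C = {nLit (.L u v), nLit (.V u i), pLit (.D v i false)} }

/-- (A16) `¬R[u,v] ∨ ¬V[u,i] ∨ D[v,i,1]`. -/
def A16 (F : CNFFam) (A : Finset ℕ) : Set VClause :=
  { C | ∃ u ∈ A, ∃ v ∈ A, ∃ i ∈ Finset.Icc 1 F.n,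
      C = {nLit (.R u v), nLit (.V u i), pLit (.D v i true)} }

/-- (A17) `¬L[u,v] ∨ ¬V[u,i] ∨ ¬D[v,i',b] ∨ D[u,i',b]`, `i' ≠ i`. -/
def A17 (F : CNFFam) (A : Finset ℕ) : Set VClause :=
  { C | ∃ u ∈ A, ∃ v ∈ A, ∃ i ∈ Finset.Icc 1 F.n, ∃ i' ∈ Finset.Icc 1 F.n, ∃ b : Bool,
      i' ≠ i ∧ C = {nLit (.L u v), nLit (.V u i), nLit (.D v i' b), pLit (.D u i' b)} }

/-- (A18) `¬R[u,v] ∨ ¬V[u,i] ∨ ¬D[v,i',b] ∨ D[u,i',b]`, `i' ≠ i`. -/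
def A18 (F : CNFFam) (A : Finset ℕ) : Set VClause :=
  { C | ∃ u ∈ A, ∃ v ∈ A, ∃ i ∈ Finset.Icc 1 F.n, ∃ i' ∈ Finset.Icc 1 F.n, ∃ b : Bool,
      i' ≠ i ∧ C = {nLit (.R u v), nLit (.V u i), nLit (.D v i' b), pLit (.D u i' b)} }

/-- (A19) `¬I[u,j] ∨ D[u,i,b]` for `X_i^{(b)} ∈ C_j`. -/
def A19 (F : CNFFam) (A : Finset ℕ) : Set VClause :=
  { C | ∃ u ∈ A, ∃ j ∈ Finset.Icc 1 F.m, ∃ i : ℕ, ∃ b : Bool,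
      (i, b) ∈ F.Cl j ∧ C = {nLit (.I u j), pLit (.D u i b)} }

/-- (A20) `¬D[u,i,0] ∨ ¬D[u,i,1]`. -/
def A20 (F : CNFFam) (A : Finset ℕ) : Set VClause :=
  { C | ∃ u ∈ A, ∃ i ∈ Finset.Icc 1 F.n, C = {nLit (.D u i false), nLit (.D u i true)} }

/-- (A21) `¬D[s,i,b]` (for the last index `t`). -/
def A21 (F : CNFFam) (t : ℕ) : Set VClause :=
  { C | ∃ i ∈ Finset.Icc 1 F.n, ∃ b : Bool, C = {nLit (.D t i b)} }

/-- (A22) `¬P[u] ∨ ¬L[u,v] ∨ P[v]`. -/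
def A22 (A : Finset ℕ) : Set VClause :=
  { C | ∃ u ∈ A, ∃ v ∈ A, C = {nLit (.P u), nLit (.L u v), pLit (.P v)} }

/-- (A23) `¬P[u] ∨ ¬R[u,v] ∨ P[v]`. -/
def A23 (A : Finset ℕ) : Set VClause :=
  { C | ∃ u ∈ A, ∃ v ∈ A, C = {nLit (.P u), nLit (.R u v), pLit (.P v)} }

/-- (A24) `P[s]` (for the last index `t`). -/
def A24 (t : ℕ) : Set VClause := { C | C = {pLit (.P t)} }

end Ref

/-- The formula `REF(F, A)` with index set `A` (in place of `[s]`) and last index `t`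
(in the role of `s`): the clauses (A1)–(A21). -/
def REFA (F : CNFFam) (A : Finset ℕ) (t : ℕ) : Set VClause :=
  Ref.A1 F A ∪ Ref.A2 F A ∪ Ref.A3 A ∪ Ref.A4 A ∪ Ref.A5 F A ∪ Ref.A6 F A ∪
    Ref.A7 A ∪ Ref.A8 A ∪ Ref.A9 A ∪ Ref.A10 A ∪ Ref.A11 A ∪ Ref.A12 A ∪ Ref.A13 A ∪
    Ref.A14 A ∪ Ref.A15 F A ∪ Ref.A16 F A ∪ Ref.A17 F A ∪ Ref.A18 F A ∪ Ref.A19 F A ∪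
    Ref.A20 F A ∪ Ref.A21 F t

/-- The formula `REF(F, s)`. -/
def REF (F : CNFFam) (s : ℕ) : Set VClause := REFA F (Finset.Icc 1 s) s

/-- Relativization of a clause: add the literal `¬P[u]` for every index `u` mentioned
by a variable occurring in the clause. -/
def relCl (C : VClause) : VClause :=
  C ∪ (C.image (fun l => RefVar.idx l.1)).image (fun u => nLit (.P u))

/-- The formula `RREF(F, s)`: the relativized clauses of `REF(F,s)` together with the
clauses (A22), (A23) and (A24). -/
def RREF (F : CNFFam) (s : ℕ) : Set VClause :=
  (relCl '' REF F s) ∪ Ref.A22 (Finset.Icc 1 s) ∪ Ref.A23 (Finset.Icc 1 s) ∪ Ref.A24 s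

/-- `REF(F,s)` with the clauses of types (A7) and (A8) deleted. -/
def REFnoLR (F : CNFFam) (s : ℕ) : Set VClause :=
  Ref.A1 F (Finset.Icc 1 s) ∪ Ref.A2 F (Finset.Icc 1 s) ∪ Ref.A3 (Finset.Icc 1 s) ∪
    Ref.A4 (Finset.Icc 1 s) ∪ Ref.A5 F (Finset.Icc 1 s) ∪ Ref.A6 F (Finset.Icc 1 s) ∪
    Ref.A9 (Finset.Icc 1 s) ∪ Ref.A10 (Finset.Icc 1 s) ∪ Ref.A11 (Finset.Icc 1 s) ∪
    Ref.A12 (Finset.Icc 1 s) ∪ Ref.A13 (Finset.Icc 1 s) ∪ Ref.A14 (Finset.Icc 1 s) ∪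
    Ref.A15 F (Finset.Icc 1 s) ∪ Ref.A16 F (Finset.Icc 1 s) ∪ Ref.A17 F (Finset.Icc 1 s) ∪
    Ref.A18 F (Finset.Icc 1 s) ∪ Ref.A19 F (Finset.Icc 1 s) ∪ Ref.A20 F (Finset.Icc 1 s) ∪
    Ref.A21 F s

/-- `RREF'(F,s)`: obtained from `RREF(F,s)` by deleting the (relativized) clauses of
types (A7) and (A8). -/
def RREF' (F : CNFFam) (s : ℕ) : Set VClause :=
  (relCl '' REFnoLR F s) ∪ Ref.A22 (Finset.Icc 1 s) ∪ Ref.A23 (Finset.Icc 1 s) ∪ Ref.A24 s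

/-! ## Refutations as structures -/

/-- A structure `(D, V, I, L, R)` of the type of a length-`s` refutation. -/
structure RefStruct where
  Dr : ℕ → ℕ → Bool → Bool
  Vf : ℕ → ℕ
  If' : ℕ → ℕ
  Lf : ℕ → ℕ
  Rf : ℕ → ℕ

namespace RefStruct

/-- The typing conditions: `D ⊆ [s]×[n]×B`, `V : [s] → [n]∪{0}`, `I : [s] → [m]∪{0}`,
`L, R : [s] → [s]∪{0}`. -/
def WFOn (M : RefStruct) (s n m : ℕ) : Prop :=
  (∀ u i b, M.Dr u i b = true → u ∈ Finset.Icc 1 s ∧ i ∈ Finset.Icc 1 n) ∧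
  (∀ u ∈ Finset.Icc 1 s, M.Vf u ≤ n) ∧
  (∀ u ∈ Finset.Icc 1 s, M.If' u ≤ m) ∧
  (∀ u ∈ Finset.Icc 1 s, M.Lf u ≤ s) ∧
  (∀ u ∈ Finset.Icc 1 s, M.Rf u ≤ s)

/-- (R1)–(R8): the structure is a refutation of `F` of length `s`. -/
def IsRefutationOf (M : RefStruct) (F : CNFFam) (s : ℕ) : Prop :=
  ∀ u ∈ Finset.Icc 1 s,
    ((M.Vf u = 0 ∨ M.If' u = 0) ∧ ¬(M.Vf u = 0 ∧ M.If' u = 0)) ∧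
    (M.If' u = 0 → M.Lf u ≠ 0 ∧ M.Rf u ≠ 0) ∧
    (M.Lf u < u ∧ M.Rf u < u) ∧
    (∀ i ∈ Finset.Icc 1 F.n, ∀ v ∈ Finset.Icc 1 s,
      (M.Vf u = i → M.Lf u = v → M.Dr v i false = true) ∧
      (M.Vf u = i → M.Rf u = v → M.Dr v i true = true) ∧
      (∀ i' ∈ Finset.Icc 1 F.n, ∀ b : Bool,
        M.Vf u = i → i ≠ i' → M.Lf u = v → M.Dr v i' b = true → M.Dr u i' b = true) ∧
      (∀ i' ∈ Finset.Icc 1 F.n, ∀ b : Bool,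
        M.Vf u = i → i ≠ i' → M.Rf u = v → M.Dr v i' b = true → M.Dr u i' b = true)) ∧
    (∀ j ∈ Finset.Icc 1 F.m, ∀ i : ℕ, ∀ b : Bool,
      M.If' u = j → (i, b) ∈ F.Cl j → M.Dr u i b = true) ∧
    (∀ i ∈ Finset.Icc 1 F.n, ¬(M.Dr u i false = true ∧ M.Dr u i true = true)) ∧
    (∀ i ∈ Finset.Icc 1 F.n, ∀ b : Bool, M.Dr s i b = false)

/-- The truth assignment associated to a structure. -/
def assign (M : RefStruct) : RefVar → Bool
  | .D u i b => M.Dr u i b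
  | .V u i => M.Vf u == i
  | .I u j => M.If' u == j
  | .L u v => M.Lf u == v
  | .R u v => M.Rf u == v
  | .P _ => true

end RefStruct

/-! ## The full-tree refutation -/

/-- The level `h` of the node numbered `u` in the full binary tree with `n+1` levels. -/
def levelOf (n u : ℕ) : ℕ := Nat.log 2 (2 ^ (n + 1) - u)

/-- The value (position within its level, `a₁` most significant) of the node numbered `u`. -/
def valOf (n u : ℕ) : ℕ := u - (2 ^ (n + 1) + 1 - 2 ^ (levelOf n u + 1))

/-- The `i`-th bit `a_i` of the binary string `a` labelling the node numbered `u`. -/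
def digitOf (n u i : ℕ) : Bool := (valOf n u).testBit (levelOf n u - i)

/-- The clause `C_a = X_1^{(a_1)} ∨ ⋯ ∨ X_n^{(a_n)}` labelling the leaf numbered `u`. -/
def leafClause (F : CNFFam) (u : ℕ) : Clause ℕ :=
  (Finset.Icc 1 F.n).image (fun i => (i, digitOf F.n u i))

/-- The full-tree Resolution refutation `(D*, V*, I*, L*, R*)` of `F`,
of length `s* = 2^{n+1} - 1`. -/
noncomputable def fullTree (F : CNFFam) : RefStruct where
  Dr := fun u i b =>
    decide (1 ≤ u ∧ u ≤ 2 ^ (F.n + 1) - 1 ∧ 1 ≤ i ∧ i ≤ levelOf F.n u) &&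
      (digitOf F.n u i == b)
  Vf := fun u =>
    if 1 ≤ u ∧ u ≤ 2 ^ (F.n + 1) - 1 ∧ levelOf F.n u < F.n then levelOf F.n u + 1 else 0
  If' := fun u =>
    if 1 ≤ u ∧ u ≤ 2 ^ (F.n + 1) - 1 ∧ levelOf F.n u = F.n then
      sInf { j : ℕ | j ∈ Finset.Icc 1 F.m ∧ F.Cl j ⊆ leafClause F u }
    else 0
  Lf := fun u =>
    if 1 ≤ u ∧ u ≤ 2 ^ (F.n + 1) - 1 ∧ levelOf F.n u < F.n then
      2 ^ (F.n + 1) + 1 + 2 * valOf F.n u - 2 ^ (levelOf F.n u + 2)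
    else 0
  Rf := fun u =>
    if 1 ≤ u ∧ u ≤ 2 ^ (F.n + 1) - 1 ∧ levelOf F.n u < F.n then
      2 ^ (F.n + 1) + 2 + 2 * valOf F.n u - 2 ^ (levelOf F.n u + 2)
    else 0

/-! ## Blocks, the family 𝓗, and conditions -/

/-- The integer `k` with `2^k < 3w ≤ 2^{k+1}`. -/
def kOf (w : ℕ) : ℕ := Nat.log 2 (3 * w - 1)

/-- The block `B*_i` of `[s*]`, `s* = 2^{n+1} - 1`. -/
def Bstar (n w i : ℕ) : Finset ℕ :=
  let s' := 2 ^ (n + 1) - 1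
  let k := kOf w
  if i = 0 then Finset.Icc (s' - 2 ^ (k + 1) + 2) s'
  else Finset.Icc (s' + 2 - 2 ^ (k + 1 + i)) (s' - 2 ^ (k + i) + 1)

/-- The block `B_i` of `[s]`. -/
def Bblk (n s w i : ℕ) : Finset ℕ :=
  let k := kOf w
  if i = 0 then Finset.Icc (s - 2 ^ (k + 1) + 2) s
  else if i = n - k then Finset.Icc 1 (s - 2 ^ (k + 1) * (n - k) + 1)
  else Finset.Icc (s - 2 ^ (k + 1) * (i + 1) + 2) (s - 2 ^ (k + 1) * i + 1)

/-- The bijection `t : B_0 → B*_0`, `t(u) = u - s + s*`. -/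
def tmap (n s u : ℕ) : ℕ := u + (2 ^ (n + 1) - 1 - s)

/-- `h` (a set of pairs) is a partial function. -/
def pfun (h : Finset (ℕ × ℕ)) : Prop :=
  ∀ p ∈ h, ∀ q ∈ h, p.1 = q.1 → p.2 = q.2

/-- The domain of a partial function given as a set of pairs. -/
def pdom (h : Finset (ℕ × ℕ)) : Finset ℕ := h.image Prod.fst

/-- The image of a partial function given as a set of pairs. -/
def pimg (h : Finset (ℕ × ℕ)) : Finset ℕ := h.image Prod.snd

/-- Membership in the family `𝓗`: injective partial functions
`h : [s]∪{0} → [s*]∪{0}` satisfying (H1)–(H4). -/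
def memH (n s w : ℕ) (h : Finset (ℕ × ℕ)) : Prop :=
  pfun h ∧
  (∀ p ∈ h, p.1 ∈ insert 0 (Finset.Icc 1 s) ∧
    p.2 ∈ insert 0 (Finset.Icc 1 (2 ^ (n + 1) - 1))) ∧
  (∀ p ∈ h, ∀ q ∈ h, p.2 = q.2 → p.1 = q.1) ∧
  ((0, 0) ∈ h) ∧
  (∀ p ∈ h, p.1 ∈ Bblk n s w 0 → p.2 = tmap n s p.1) ∧
  (∀ p ∈ h, ∀ i ∈ Finset.Icc 1 (n - kOf w), p.1 ∈ Bblk n s w i → p.2 ∈ Bstar n w i)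

/-- `∂I = {L*(u) | u ∈ I∖{0}} ∪ {R*(u) | u ∈ I∖{0}}`. -/
noncomputable def bnd (F : CNFFam) (I : Finset ℕ) : Finset ℕ :=
  (I.erase 0).image (fullTree F).Lf ∪ (I.erase 0).image (fullTree F).Rf

/-- A condition: a pair `p = (g, h)` of members of `𝓗` with (C1) `g ⊆ h` and
(C2) `Img(h) = Img(g) ∪ ∂Img(g)`. -/
def IsCond (F : CNFFam) (s w : ℕ) (g h : Finset (ℕ × ℕ)) : Prop :=
  memH F.n s w g ∧ memH F.n s w h ∧ g ⊆ h ∧ pimg h = pimg g ∪ bnd F (pimg g)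

/-- Application of a partial function given as a set of pairs. -/
noncomputable def papp (g : Finset (ℕ × ℕ)) (u : ℕ) : ℕ := sInf { v : ℕ | (u, v) ∈ g }

/-- Inverse application of an (injective) partial function given as a set of pairs. -/
noncomputable def pinv (h : Finset (ℕ × ℕ)) (y : ℕ) : ℕ := sInf { u : ℕ | (u, y) ∈ h }

/-- The partial assignment `α(p)` determined by a condition `p = (g, h)`: it is defined
precisely on the variables (of `REF(F,s)`) mentioning some `u ∈ Dom(g) ∖ {0}`, where it is
read off from the full-tree refutation through `g` (and `h` for the `L`- and `R`-variables). -/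
noncomputable def alphaP (F : CNFFam) (g h : Finset (ℕ × ℕ)) : RefVar → Option Bool :=
  fun x =>
    if RefVar.idx x ∈ (pdom g).erase 0 then
      match x with
      | RefVar.D u i b => some ((fullTree F).assign (RefVar.D (papp g u) i b))
      | RefVar.V u i => some ((fullTree F).assign (RefVar.V (papp g u) i))
      | RefVar.I u j => some ((fullTree F).assign (RefVar.I (papp g u) j))
      | RefVar.L u v => some (decide (v = pinv h ((fullTree F).Lf (papp g u))))
      | RefVar.R u v => some (decide (v = pinv h ((fullTree F).Rf (papp g u))))
      | RefVar.P _ => none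
    else none

open scoped Classical in
/-- The restriction `p↾I` of a condition `p = (g,h)`: `g'` is the restriction of `g` to
`I ∪ {0}` and `h'` is the restriction of `h` with image `Img(g') ∪ ∂Img(g')`. -/
noncomputable def condRestrict (F : CNFFam) (g h : Finset (ℕ × ℕ)) (I : Finset ℕ) :
    Finset (ℕ × ℕ) × Finset (ℕ × ℕ) :=
  let g' := g.filter (fun p => p.1 ∈ insert 0 I)
  let h' := h.filter (fun p => p.2 ∈ pimg g' ∪ bnd F (pimg g'))
  (g', h')

/-! Restricting `g` only shrinks its domain, and at an index `u` that survives, the data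
`g(u)`, `h⁻¹(L*(g(u)))`, `h⁻¹(R*(g(u)))` defining `α(p)` are read off pairs that also survive:
`h'` keeps exactly the pairs of `h` with image in `Img(g') ∪ ∂Img(g')`, and `h` is injective.
(H1)–(H4) pass to subsets, and (C2) for `p↾I` follows from (C2) for `p` since `∂` is monotone. -/

section PartialFunctions

variable {g h : Finset (ℕ × ℕ)} {u v y : ℕ}

lemma papp_mem (hu : u ∈ pdom g) : (u, papp g u) ∈ g := by
  obtain ⟨p, hp, rfl⟩ := Finset.mem_image.mp hu
  exact Nat.sInf_mem (s := {v | (p.1, v) ∈ g}) ⟨p.2, hp⟩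

lemma papp_eq_of_mem (hg : pfun g) (huv : (u, v) ∈ g) : papp g u = v :=
  hg _ (papp_mem (Finset.mem_image_of_mem Prod.fst huv)) _ huv rfl

lemma papp_eq_of_subset {g' : Finset (ℕ × ℕ)} (hsub : g' ⊆ g) (hg : pfun g)
    (hu : u ∈ pdom g') : papp g' u = papp g u :=
  (papp_eq_of_mem hg (hsub (papp_mem hu))).symm

lemma pinv_mem (hy : y ∈ pimg h) : (pinv h y, y) ∈ h := by
  obtain ⟨p, hp, rfl⟩ := Finset.mem_image.mp hy
  exact Nat.sInf_mem (s := {u | (u, p.2) ∈ h}) ⟨p.1, hp⟩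

lemma pinv_eq_of_subset {h' : Finset (ℕ × ℕ)} (hsub : h' ⊆ h)
    (hinj : ∀ p ∈ h, ∀ q ∈ h, p.2 = q.2 → p.1 = q.1) (hy : y ∈ pimg h') :
    pinv h' y = pinv h y :=
  hinj _ (hsub (pinv_mem hy)) _ (pinv_mem (Finset.image_subset_image hsub hy)) rfl

end PartialFunctions

lemma memH.mono {n s w : ℕ} {g h : Finset (ℕ × ℕ)} (hh : memH n s w h) (hsub : g ⊆ h)
    (h0 : (0, 0) ∈ g) : memH n s w g := by
  obtain ⟨hfun, hrange, hinj, -, hB0, hB⟩ := hh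
  exact ⟨fun p hp q hq => hfun p (hsub hp) q (hsub hq), fun p hp => hrange p (hsub hp),
    fun p hp q hq => hinj p (hsub hp) q (hsub hq), h0, fun p hp => hB0 p (hsub hp),
    fun p hp => hB p (hsub hp)⟩

lemma bnd_mono (F : CNFFam) {I J : Finset ℕ} (hIJ : I ⊆ J) : bnd F I ⊆ bnd F J :=
  Finset.union_subset_union (Finset.image_subset_image (Finset.erase_subset_erase _ hIJ))
    (Finset.image_subset_image (Finset.erase_subset_erase _ hIJ))

lemma fullTree_Lf_zero (F : CNFFam) : (fullTree F).Lf 0 = 0 := by simp [fullTree]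

lemma fullTree_Rf_zero (F : CNFFam) : (fullTree F).Rf 0 = 0 := by simp [fullTree]

lemma IsCond.fullTree_Lf_mem_pimg {F : CNFFam} {s w : ℕ} {g h : Finset (ℕ × ℕ)}
    (hcond : IsCond F s w g h) {y : ℕ} (hy : y ∈ pimg g) : (fullTree F).Lf y ∈ pimg h := by
  -- `∂` skips the node `0`, but `L*(0) = 0 = h(0)`.
  rcases eq_or_ne y 0 with rfl | hy0
  · rw [fullTree_Lf_zero]; exact Finset.mem_image_of_mem Prod.snd hcond.2.1.2.2.2.1
  · rw [hcond.2.2.2]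
    exact Finset.mem_union_right _ <| Finset.mem_union_left _ <|
      Finset.mem_image_of_mem _ (Finset.mem_erase.2 ⟨hy0, hy⟩)

lemma IsCond.fullTree_Rf_mem_pimg {F : CNFFam} {s w : ℕ} {g h : Finset (ℕ × ℕ)}
    (hcond : IsCond F s w g h) {y : ℕ} (hy : y ∈ pimg g) : (fullTree F).Rf y ∈ pimg h := by
  rcases eq_or_ne y 0 with rfl | hy0
  · rw [fullTree_Rf_zero]; exact Finset.mem_image_of_mem Prod.snd hcond.2.1.2.2.2.1
  · rw [hcond.2.2.2]
    exact Finset.mem_union_right _ <| Finset.mem_union_right _ <|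
      Finset.mem_image_of_mem _ (Finset.mem_erase.2 ⟨hy0, hy⟩)

lemma alphaP_eq_none {F : CNFFam} {g h : Finset (ℕ × ℕ)} {x : RefVar}
    (hx : x.idx ∉ (pdom g).erase 0) : alphaP F g h x = none := by
  simp [alphaP, hx]

lemma alphaP_eq_of_subset {F : CNFFam} {G H g h : Finset (ℕ × ℕ)} (hGg : G ⊆ g) (hHh : H ⊆ h)
    (hg : pfun g) (hinj : ∀ p ∈ h, ∀ q ∈ h, p.2 = q.2 → p.1 = q.1)
    (hL : ∀ y ∈ pimg G, (fullTree F).Lf y ∈ pimg H)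
    (hR : ∀ y ∈ pimg G, (fullTree F).Rf y ∈ pimg H)
    {x : RefVar} (hx : x.idx ∈ (pdom G).erase 0) : alphaP F G H x = alphaP F g h x := by
  have hx' : x.idx ∈ (pdom g).erase 0 :=
    Finset.erase_subset_erase _ (Finset.image_subset_image hGg) hx
  have hu : x.idx ∈ pdom G := Finset.mem_of_mem_erase hx
  have hpapp := papp_eq_of_subset hGg hg hu
  have hy : papp g x.idx ∈ pimg G := hpapp ▸ Finset.mem_image_of_mem Prod.snd (papp_mem hu)
  cases x <;> simp only [alphaP, if_pos hx, if_pos hx'] <;> simp only [RefVar.idx] at hpapp hy ⊢ <;>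
    rw [hpapp]
  · rw [pinv_eq_of_subset hHh hinj (hL _ hy)]
  · rw [pinv_eq_of_subset hHh hinj (hR _ hy)]

lemma optExtends_alphaP_of_subset {F : CNFFam} {G H g h : Finset (ℕ × ℕ)} (hGg : G ⊆ g)
    (hHh : H ⊆ h) (hg : pfun g) (hinj : ∀ p ∈ h, ∀ q ∈ h, p.2 = q.2 → p.1 = q.1)
    (hL : ∀ y ∈ pimg G, (fullTree F).Lf y ∈ pimg H)
    (hR : ∀ y ∈ pimg G, (fullTree F).Rf y ∈ pimg H) :
    optExtends (alphaP F G H) (alphaP F g h) := by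
  intro x b hb
  by_cases hx : x.idx ∈ (pdom G).erase 0
  · rwa [← alphaP_eq_of_subset hGg hHh hg hinj hL hR hx]
  · rw [alphaP_eq_none hx] at hb
    cases hb

section Restriction

variable {F : CNFFam} {g h : Finset (ℕ × ℕ)} {I : Finset ℕ}

lemma mem_condRestrict_fst {p : ℕ × ℕ} :
    p ∈ (condRestrict F g h I).1 ↔ p ∈ g ∧ p.1 ∈ insert 0 I := by
  simp [condRestrict]

lemma mem_condRestrict_snd {p : ℕ × ℕ} :
    p ∈ (condRestrict F g h I).2 ↔
      p ∈ h ∧ p.2 ∈ pimg (condRestrict F g h I).1 ∪ bnd F (pimg (condRestrict F g h I).1) := by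
  simp [condRestrict]

lemma condRestrict_fst_subset : (condRestrict F g h I).1 ⊆ g :=
  fun _ hp => (mem_condRestrict_fst.1 hp).1

lemma condRestrict_snd_subset : (condRestrict F g h I).2 ⊆ h :=
  fun _ hp => (mem_condRestrict_snd.1 hp).1

lemma pimg_condRestrict_snd (himg : pimg h = pimg g ∪ bnd F (pimg g)) :
    pimg (condRestrict F g h I).2 =
      pimg (condRestrict F g h I).1 ∪ bnd F (pimg (condRestrict F g h I).1) := by
  have hG : pimg (condRestrict F g h I).1 ⊆ pimg g :=
    Finset.image_subset_image condRestrict_fst_subset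
  apply Finset.Subset.antisymm
  · intro y hy
    obtain ⟨p, hp, rfl⟩ := Finset.mem_image.1 hy
    exact (mem_condRestrict_snd.1 hp).2
  · intro y hy
    have hyh : y ∈ pimg h := himg ▸ Finset.union_subset_union hG (bnd_mono F hG) hy
    obtain ⟨p, hp, rfl⟩ := Finset.mem_image.1 hyh
    exact Finset.mem_image_of_mem _ (mem_condRestrict_snd.2 ⟨hp, hy⟩)

lemma IsCond.restrict {s w : ℕ} (hcond : IsCond F s w g h) (I : Finset ℕ) :
    IsCond F s w (condRestrict F g h I).1 (condRestrict F g h I).2 := by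
  obtain ⟨hgH, hhH, hgh, himg⟩ := hcond
  have h0 : ((0, 0) : ℕ × ℕ) ∈ (condRestrict F g h I).1 :=
    mem_condRestrict_fst.2 ⟨hgH.2.2.2.1, Finset.mem_insert_self _ _⟩
  have hGH : (condRestrict F g h I).1 ⊆ (condRestrict F g h I).2 := fun p hp =>
    mem_condRestrict_snd.2 ⟨hgh (condRestrict_fst_subset hp),
      Finset.mem_union_left _ (Finset.mem_image_of_mem _ hp)⟩
  exact ⟨hgH.mono condRestrict_fst_subset h0, hhH.mono condRestrict_snd_subset (hGH h0), hGH,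
    pimg_condRestrict_snd himg⟩

end Restriction

theorem condition_restriction_general (F : CNFFam) (w s : ℕ)
    (g h : Finset (ℕ × ℕ)) (hcond : IsCond F s w g h) (I : Finset ℕ) :
    IsCond F s w (condRestrict F g h I).1 (condRestrict F g h I).2 ∧
    optExtends (alphaP F (condRestrict F g h I).1 (condRestrict F g h I).2)
      (alphaP F g h) := by
  have hres := hcond.restrict I
  exact ⟨hres, optExtends_alphaP_of_subset condRestrict_fst_subset condRestrict_snd_subset
    hcond.1.1 hcond.2.1.2.2.1 (fun _ hy => hres.fullTree_Lf_mem_pimg hy)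
    (fun _ hy => hres.fullTree_Rf_mem_pimg hy)⟩

/-- Claim 2: for an unsatisfiable CNF `F` with `n` variables and integers `w, s ≥ 1` with
`2^n ≥ s ≥ 6nw`: if `p` is a condition and `I ⊆ [s]`, then `p↾I` is a condition and
`α(p↾I) ⊆ α(p)`. -/
theorem condition_restriction (F : CNFFam) (hWF : F.WF) (hunsat : ¬F.Sat) (w s : ℕ)
    (hn : 1 ≤ F.n) (hw : 1 ≤ w) (hs : 1 ≤ s)
    (hlow : 6 * F.n * w ≤ s) (hhigh : s ≤ 2 ^ F.n)
    (g h : Finset (ℕ × ℕ)) (hcond : IsCond F s w g h)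
    (I : Finset ℕ) (hI : I ⊆ Finset.Icc 1 s) :
    IsCond F s w (condRestrict F g h I).1 (condRestrict F g h I).2 ∧
    optExtends (alphaP F (condRestrict F g h I).1 (condRestrict F g h I).2)
      (alphaP F g h) :=
  condition_restriction_general F w s g h hcond I
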